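/- If an abelian category A with enough projectives contains a virtually d-periodic object for some d ≥ 1, then the singularity category D_sg(A) has no silting subcategory. -/

import Mathlib

open CategoryTheory Limits Pretriangulated

noncomputable section

namespace SingPaper

variable {A : Type*} [Category A] [Abelian A] [EnoughProjectives A]

/-- A chosen first syzygy `Ω(M)`: the kernel of the chosen epimorphism
`Projective.π M : Projective.over M ⟶ M` from a projective object. -/
def syz (M : A) : A := kernel (Projective.π M)

/-- Iterated syzygies `Ω^d(M)`. -/
def syzPow (d : ℕ) (M : A) : A := match d with
  | 0 => M
  | n + 1 => syz (syzPow n M)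

/-- `extClosure M` is the class of objects of `⟨M⟩`, the smallest full subcategory of `A`
containing `M` and all projective objects which is closed under direct summands and
extensions. -/
inductive extClosure (M : A) : A → Prop
  | self : extClosure M M
  | proj (P : A) : Projective P → extClosure M P
  | summand (X Y : A) (s : X ⟶ Y) (r : Y ⟶ X) :
      s ≫ r = 𝟙 X → extClosure M Y → extClosure M X
  | ext (X Y Z : A) (f : X ⟶ Y) (g : Y ⟶ Z) (w : f ≫ g = 0) :
      (ShortComplex.mk f g w).ShortExact →
      extClosure M X → extClosure M Z → extClosure M Y

/-- `M` has finite projective dimension iff some iterated syzygy is projective. -/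
def HasFiniteProjDim (M : A) : Prop := ∃ n : ℕ, Projective (syzPow n M)

/-- `M` is virtually `d`-periodic: it has infinite projective dimension and
`Ω^d(M)` belongs to `⟨M⟩`. -/
def VirtuallyPeriodic (d : ℕ) (M : A) : Prop :=
  ¬ HasFiniteProjDim M ∧ extClosure M (syzPow d M)

variable {T : Type*} [Category T] [Preadditive T] [HasZeroObject T] [HasShift T ℤ]
  [∀ n : ℤ, (shiftFunctor T n).Additive] [Pretriangulated T]

/-- `ι : A ⥤ T` exhibits the triangulated category `T` as the singularity category
`D_sg(A) = D^b(A)/K^b(P)` of `A`; we record the characteristic properties of the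
composite functor `A ⥤ D^b(A) ⥤ D_sg(A)` sending an object to the corresponding
stalk complex in degree `0`. -/
structure IsSingularityCategory (ι : A ⥤ T) : Prop where
  /-- projective objects of `A` become zero objects in `D_sg(A)` -/
  proj_isZero : ∀ P : A, Projective P → IsZero (ι.obj P)
  /-- any short exact sequence in `A` induces a distinguished triangle in `D_sg(A)` -/
  ses_triangle : ∀ {X Y Z : A} (f : X ⟶ Y) (g : Y ⟶ Z) (w : f ≫ g = 0),
      (ShortComplex.mk f g w).ShortExact →
      ∃ h : ι.obj Z ⟶ (ι.obj X)⟦(1 : ℤ)⟧,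
        Triangle.mk (ι.map f) (ι.map g) h ∈ distTriang T
  /-- an object of `A` becomes zero in `D_sg(A)` iff it has finite projective dimension -/
  isZero_iff : ∀ M : A, IsZero (ι.obj M) ↔ HasFiniteProjDim M
  /-- every object of `D_sg(A)` is isomorphic to a shift of a stalk complex -/
  obj_surj : ∀ X : T, ∃ (M : A) (n : ℤ), Nonempty (X ≅ (ι.obj M)⟦n⟧)

/-- The class of objects of the smallest thick triangulated subcategory of `T`
containing the class of objects `S`: it is closed under isomorphisms, shifts,
direct summands and cones of morphisms between its objects. -/
inductive thickClosure (S : Set T) : T → Prop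
  | of (X : T) : X ∈ S → thickClosure S X
  | zero (X : T) : IsZero X → thickClosure S X
  | iso (X Y : T) : (X ≅ Y) → thickClosure S X → thickClosure S Y
  | shift (X : T) (n : ℤ) : thickClosure S X → thickClosure S (X⟦n⟧)
  | summand (X Y : T) (s : X ⟶ Y) (r : Y ⟶ X) :
      s ≫ r = 𝟙 X → thickClosure S Y → thickClosure S X
  | cone (Tr : Triangle T) : Tr ∈ (distTriang T) →
      thickClosure S Tr.obj₁ → thickClosure S Tr.obj₂ → thickClosure S Tr.obj₃

/-- A class of objects `S` of `T` (i.e. a full additive subcategory) is presilting if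
`Hom(X, Y⟦n⟧) = 0` for all `X, Y ∈ S` and all `n > 0`. -/
def IsPresilting (S : Set T) : Prop :=
  ∀ X ∈ S, ∀ Y ∈ S, ∀ n : ℤ, 0 < n → ∀ f : X ⟶ Y⟦n⟧, f = 0

/-- A class of objects `S` is silting if it is presilting and generates `T` as a
thick triangulated subcategory. -/
def IsSilting (S : Set T) : Prop :=
  IsPresilting S ∧ ∀ X : T, thickClosure S X

/-!
If `S` is silting, every object `X` of `D_sg(A)` has `Hom(S, X⟦n⟧) = 0` for `n ≫ 0`: this
property is thick and holds on `S` by presilting. Let `b` be such a bound for the image `N` of a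
virtually `d`-periodic `M`. The bound passes to all of `⟨M⟩`, in particular to `Ω^d(M)`, and the
syzygy sequences `0 → ΩX → P → X → 0` give `X ≅ (ΩX)⟦1⟧` in `D_sg(A)`, so `b - d` is again a
bound for `N`. Hence `Hom(S, N⟦n⟧) = 0` for all `n`, which forces `N = 0` since `S` generates;
this contradicts the infinite projective dimension of `M`.
-/

def HomVanishesAbove {C : Type*} [Category C] [HasZeroMorphisms C] [HasShift C ℤ]
    (S : Set C) (b : ℤ) (X : C) : Prop :=
  ∀ s ∈ S, ∀ n : ℤ, b < n → ∀ f : s ⟶ X⟦n⟧, f = 0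

namespace HomVanishesAbove

section General

variable {C : Type*} [Category C] [Preadditive C] [HasShift C ℤ] {S : Set C} {b c : ℤ} {X Y : C}

lemma mono (h : HomVanishesAbove S b X) (hbc : b ≤ c) : HomVanishesAbove S c X :=
  fun s hs n hn f => h s hs n (by omega) f

lemma of_retract (i : X ⟶ Y) (r : Y ⟶ X) (hir : i ≫ r = 𝟙 X) (h : HomVanishesAbove S b Y) :
    HomVanishesAbove S b X := by
  intro s hs n hn f
  calc f = (f ≫ i⟦n⟧') ≫ r⟦n⟧' := by
        rw [Category.assoc, ← Functor.map_comp, hir, CategoryTheory.Functor.map_id,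
          Category.comp_id]
    _ = 0 := by rw [h s hs n hn (f ≫ i⟦n⟧'), zero_comp]

lemma shift (h : HomVanishesAbove S b X) (m : ℤ) : HomVanishesAbove S (b - m) (X⟦m⟧) := by
  intro s hs n hn f
  rw [← Preadditive.IsIso.comp_right_eq_zero f ((shiftFunctorAdd' C m n (m + n) rfl).inv.app X)]
  exact h s hs (m + n) (by omega) _

lemma of_isZero [∀ n : ℤ, (shiftFunctor C n).Additive] (hX : IsZero X) (b : ℤ) :
    HomVanishesAbove S b X :=
  fun _ _ n _ f => ((shiftFunctor C n).map_isZero hX).eq_of_tgt f 0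

end General

variable {S : Set T} {b : ℤ}

lemma of_distTriang₂ {Tr : Triangle T} (hTr : Tr ∈ distTriang T)
    (h₁ : HomVanishesAbove S b Tr.obj₁) (h₃ : HomVanishesAbove S b Tr.obj₃) :
    HomVanishesAbove S b Tr.obj₂ := by
  intro s hs n hn f
  obtain ⟨g, rfl⟩ := Triangle.coyoneda_exact₂ _ (Triangle.shift_distinguished Tr hTr n) f
    (h₃ s hs n hn _)
  rw [show g = 0 from h₁ s hs n hn g]
  exact zero_comp

lemma of_distTriang₃ {Tr : Triangle T} (hTr : Tr ∈ distTriang T)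
    (h₁ : HomVanishesAbove S (b + 1) Tr.obj₁) (h₂ : HomVanishesAbove S b Tr.obj₂) :
    HomVanishesAbove S b Tr.obj₃ :=
  of_distTriang₂ (rot_of_distTriang _ hTr) h₂ ((h₁.shift 1).mono (by omega))

end HomVanishesAbove

lemma exists_homVanishesAbove_of_thickClosure {S : Set T} (hS : IsPresilting S) {X : T}
    (hX : thickClosure S X) : ∃ b, HomVanishesAbove S b X := by
  induction hX with
  | of X hX => exact ⟨0, fun s hs n hn f => hS s hs X hX n hn f⟩
  | zero X hX => exact ⟨0, .of_isZero hX 0⟩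
  | iso X Y e _ ih =>
    obtain ⟨b, hb⟩ := ih
    exact ⟨b, hb.of_retract e.inv e.hom e.inv_hom_id⟩
  | shift X m _ ih =>
    obtain ⟨b, hb⟩ := ih
    exact ⟨b - m, hb.shift m⟩
  | summand X Y i r hir _ ih =>
    obtain ⟨b, hb⟩ := ih
    exact ⟨b, hb.of_retract i r hir⟩
  | cone Tr hTr _ _ ih₁ ih₂ =>
    obtain ⟨b₁, hb₁⟩ := ih₁
    obtain ⟨b₂, hb₂⟩ := ih₂
    exact ⟨max b₁ b₂, .of_distTriang₃ hTr (hb₁.mono (by omega)) (hb₂.mono (by omega))⟩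

lemma shift_hom_shift_eq_zero {C : Type*} [Category C] [Preadditive C] [HasShift C ℤ]
    {X N : C} (h : ∀ (n : ℤ) (g : X ⟶ N⟦n⟧), g = 0) (m n : ℤ) (g : X⟦m⟧ ⟶ N⟦n⟧) : g = 0 := by
  let e := (shiftFunctorAdd' C (n - m) m n (by omega)).app N
  obtain ⟨g', hg'⟩ := (shiftFunctor C m).map_surjective (g ≫ e.hom)
  rw [← Preadditive.IsIso.comp_right_eq_zero g e.hom, ← hg', h _ g', Functor.map_zero]

lemma thickClosure_hom_shift_eq_zero {S : Set T} {N : T}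
    (hN : ∀ s ∈ S, ∀ (n : ℤ) (f : s ⟶ N⟦n⟧), f = 0) {X : T} (hX : thickClosure S X) :
    ∀ (n : ℤ) (g : X ⟶ N⟦n⟧), g = 0 := by
  induction hX with
  | of X hX => exact hN X hX
  | zero X hX => exact fun n g => hX.eq_of_src g 0
  | iso X Y e _ ih =>
    intro n g
    exact (Preadditive.IsIso.comp_left_eq_zero e.hom g).1 (ih n _)
  | shift X m _ ih => exact shift_hom_shift_eq_zero ih m
  | summand X Y i r hir _ ih =>
    intro n g
    rw [← Category.id_comp g, ← hir, Category.assoc, ih n (r ≫ g), comp_zero]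
  | cone Tr hTr _ _ ih₁ ih₂ =>
    intro n g
    obtain ⟨u, rfl⟩ := Triangle.yoneda_exact₃ Tr hTr g (ih₂ n _)
    rw [shift_hom_shift_eq_zero ih₁ 1 n u, comp_zero]

lemma isZero_of_homVanishesAbove {S : Set T} {N : T} (hN : ∀ b, HomVanishesAbove S b N)
    (hgen : thickClosure S N) : IsZero N := by
  have h₀ := thickClosure_hom_shift_eq_zero (fun s hs n f => hN (n - 1) s hs n (by omega) f)
    hgen 0 ((shiftFunctorZero T ℤ).inv.app N)
  rw [IsZero.iff_id_eq_zero, ← Preadditive.IsIso.comp_right_eq_zero (𝟙 N)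
    ((shiftFunctorZero T ℤ).inv.app N), Category.id_comp]
  exact h₀

lemma syz_shortExact (X : A) :
    (ShortComplex.mk (kernel.ι (Projective.π X)) (Projective.π X)
      (kernel.condition _)).ShortExact :=
  .mk' (ShortComplex.exact_of_f_is_kernel _ (kernelIsKernel _)) inferInstance inferInstance

namespace IsSingularityCategory

variable {ι : A ⥤ T} {S : Set T}

lemma homVanishesAbove_of_extClosure (h : IsSingularityCategory ι) {c : ℤ} {M : A}
    (hM : HomVanishesAbove S c (ι.obj M)) {Y : A} (hY : extClosure M Y) :
    HomVanishesAbove S c (ι.obj Y) := by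
  induction hY with
  | self => exact hM
  | proj P hP => exact .of_isZero (h.proj_isZero P hP) c
  | summand X Y i r hir _ ih =>
    exact ih.of_retract (ι.map i) (ι.map r) (by rw [← ι.map_comp, hir, ι.map_id])
  | ext X Y Z f g w hfg _ _ ihX ihZ =>
    obtain ⟨δ, hδ⟩ := h.ses_triangle f g w hfg
    exact .of_distTriang₂ hδ ihX ihZ

lemma homVanishesAbove_of_syz (h : IsSingularityCategory ι) {c : ℤ} {X : A}
    (hX : HomVanishesAbove S c (ι.obj (syz X))) : HomVanishesAbove S (c - 1) (ι.obj X) := by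
  obtain ⟨δ, hδ⟩ := h.ses_triangle _ _ _ (syz_shortExact X)
  exact .of_distTriang₂ (rot_of_distTriang _ hδ)
    (.of_isZero (h.proj_isZero _ inferInstance) _) (hX.shift 1)

lemma homVanishesAbove_of_syzPow (h : IsSingularityCategory ι) {X : A} (k : ℕ) {c : ℤ}
    (hX : HomVanishesAbove S c (ι.obj (syzPow k X))) : HomVanishesAbove S (c - k) (ι.obj X) := by
  induction k generalizing c with
  | zero => exact hX.mono (by simp)
  | succ k ih => exact (ih (h.homVanishesAbove_of_syz hX)).mono (by omega)

lemma homVanishesAbove_of_virtuallyPeriodic (h : IsSingularityCategory ι) {d : ℕ} (hd : 1 ≤ d)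
    {M : A} (hM : extClosure M (syzPow d M)) {b : ℤ} (hb : HomVanishesAbove S b (ι.obj M)) (c : ℤ) :
    HomVanishesAbove S c (ι.obj M) := by
  have step : ∀ c, HomVanishesAbove S c (ι.obj M) → HomVanishesAbove S (c - 1) (ι.obj M) :=
    fun c hc => (h.homVanishesAbove_of_syzPow d (h.homVanishesAbove_of_extClosure hc hM)).mono
      (by omega)
  have descend : ∀ k : ℕ, HomVanishesAbove S (b - k) (ι.obj M) := by
    intro k
    induction k with
    | zero => simpa using hb
    | succ k ih => exact (step _ ih).mono (by omega)
  exact (descend (b - c).toNat).mono (by omega)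

end IsSingularityCategory

/-- If `A` contains a virtually `d`-periodic object for some `d ≥ 1`, then the
singularity category of `A` has no silting subcategory. -/
theorem no_silting_of_virtuallyPeriodic (ι : A ⥤ T)
    (h : IsSingularityCategory ι)
    (hvp : ∃ (d : ℕ) (M : A), 1 ≤ d ∧ VirtuallyPeriodic d M) :
    ¬ ∃ S : Set T, IsSilting S := by
  rintro ⟨S, hpre, hgen⟩
  obtain ⟨d, M, hd, hinf, hext⟩ := hvp
  obtain ⟨b, hb⟩ := exists_homVanishesAbove_of_thickClosure hpre (hgen (ι.obj M))
  have hN := isZero_of_homVanishesAbove (h.homVanishesAbove_of_virtuallyPeriodic hd hext hb)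
    (hgen (ι.obj M))
  exact hinf ((h.isZero_iff M).1 hN)

end SingPaper
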